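/- Define the Hadamard (Fourier) transform over F₂ⁿ as the complex matrix H indexed by V × V with entries H(x,y) = 2^{−n/2} · (−1)^{⟨x,y⟩}. Then for every submodule A of V and all s, s' ∈ V, applying H to the coset state gives H · |A_{s,s'}⟩ = (−1)^{⟨s,s'⟩} · |(A^⊥)_{s',s}⟩; that is, the n-qubit Hadamard transform maps the coset state of (A, s, s') to the coset state of (A^⊥, s', s), up to the global phase (−1)^{⟨s,s'⟩}. -/

import Mathlib

open scoped BigOperators Kronecker Classical ComplexOrder

noncomputable section

/-- The vector space `F₂ⁿ`. -/
abbrev V (n : ℕ) : Type := Fin n → ZMod 2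

/-- The standard bilinear pairing `⟨x,y⟩ = ∑ i, xᵢ * yᵢ` on `F₂ⁿ`. -/
def pairing {n : ℕ} (x y : V n) : ZMod 2 := ∑ i, x i * y i

/-- `(−1)^b ∈ ℂ` for `b : ZMod 2`. -/
def sign (b : ZMod 2) : ℂ := if b = 0 then 1 else -1

lemma pairing_add_right {n : ℕ} (x y z : V n) :
    pairing x (y + z) = pairing x y + pairing x z := by
  simp [pairing, mul_add, Finset.sum_add_distrib]

lemma pairing_smul_right {n : ℕ} (c : ZMod 2) (x y : V n) :
    pairing x (c • y) = c * pairing x y := by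
  simp only [pairing, Pi.smul_apply, smul_eq_mul, Finset.mul_sum]
  exact Finset.sum_congr rfl fun i _ => by ring

/-- The orthogonal complement `A^⊥ = {y | ∀ a ∈ A, ⟨a,y⟩ = 0}`. -/
def perp {n : ℕ} (A : Submodule (ZMod 2) (V n)) : Submodule (ZMod 2) (V n) where
  carrier := {y | ∀ a ∈ A, pairing a y = 0}
  zero_mem' := by
    simp only [Set.mem_setOf_eq]
    intro a _
    simp [pairing]
  add_mem' := by
    intro y z hy hz
    simp only [Set.mem_setOf_eq] at *
    intro a ha
    rw [pairing_add_right, hy a ha, hz a ha, add_zero]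
  smul_mem' := by
    intro c y hy
    simp only [Set.mem_setOf_eq] at *
    intro a ha
    rw [pairing_smul_right, hy a ha, mul_zero]

/-- The coset `A + s = {a + s : a ∈ A}`. -/
def coset {n : ℕ} (A : Submodule (ZMod 2) (V n)) (s : V n) : Set (V n) :=
  {v | ∃ a ∈ A, v = a + s}

noncomputable instance {n : ℕ} (A : Submodule (ZMod 2) (V n)) : Fintype A :=
  Fintype.ofFinite _

/-- The coset state `|A_{s,s'}⟩ = |A|^{−1/2} ∑_{a ∈ A} (−1)^{⟨a,s'⟩} e_{a+s}`. -/
noncomputable def cosetState {n : ℕ} (A : Submodule (ZMod 2) (V n)) (s s' : V n) :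
    EuclideanSpace ℂ (V n) :=
  ((Real.sqrt (Nat.card A) : ℂ))⁻¹ •
    ∑ a : A, sign (pairing (a : V n) s') • EuclideanSpace.single ((a : V n) + s) (1 : ℂ)

/-- A family of orthogonal projections: each member is Hermitian and idempotent. -/
def IsProjFamily {ι m : Type*} [Fintype m] (P : ι → Matrix m m ℂ) : Prop :=
  ∀ p, (P p).IsHermitian ∧ P p * P p = P p

/-- Coset invariance of a family indexed by pairs `(s, s')`:
the value depends only on the pair of cosets `(A + s, A^⊥ + s')`. -/
def CosetInvariant {n : ℕ} {α : Type*} (A : Submodule (ZMod 2) (V n))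
    (F : V n × V n → α) : Prop :=
  ∀ s₁ s₁' s₂ s₂' : V n, coset A s₁ = coset A s₂ →
    coset (perp A) s₁' = coset (perp A) s₂' → F (s₁, s₁') = F (s₂, s₂')

/-- The rank-one matrix `|A_{s,s'}⟩⟨A_{s,s'}|`. -/
noncomputable def outer {n : ℕ} (A : Submodule (ZMod 2) (V n)) (s s' : V n) :
    Matrix (V n) (V n) ℂ :=
  Matrix.of fun x y => cosetState A s s' x * (starRingEnd ℂ) (cosetState A s s' y)

/-- `Π^A[P,Q] = 2^{−n} ∑_{s,s'} |A_{s,s'}⟩⟨A_{s,s'}| ⊗ P(s,s') ⊗ Q(s,s')`. -/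
noncomputable def PiMat {n : ℕ} {I J : Type*} [Fintype I] [Fintype J]
    (A : Submodule (ZMod 2) (V n)) (P : V n × V n → Matrix I I ℂ)
    (Q : V n × V n → Matrix J J ℂ) : Matrix (V n × I × J) (V n × I × J) ℂ :=
  ((2 : ℂ) ^ n)⁻¹ • ∑ s : V n, ∑ s' : V n, (outer A s s') ⊗ₖ (P (s, s') ⊗ₖ Q (s, s'))

/-- The `ℓ² → ℓ²` operator norm of a complex square matrix. -/
noncomputable def opNorm {m : Type*} [Fintype m] [DecidableEq m] (M : Matrix m m ℂ) : ℝ :=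
  ‖Matrix.toEuclideanCLM (𝕜 := ℂ) M‖

/-- The Hadamard (Fourier) transform over `F₂ⁿ`: `H(x,y) = 2^{−n/2} (−1)^{⟨x,y⟩}`. -/
noncomputable def Hmat (n : ℕ) : Matrix (V n) (V n) ℂ :=
  Matrix.of fun x y => ((Real.sqrt ((2 : ℝ) ^ n) : ℂ))⁻¹ * sign (pairing x y)

/-!
Pointwise, `|A_{s,s'}⟩(x) = |A|^{-1/2} (−1)^{⟨x − s, s'⟩} [x − s ∈ A]`. Hence the Hadamard transform
at `y` is `2^{-n/2} |A|^{-1/2} (−1)^{⟨y,s⟩}` times the character sum `∑_{a ∈ A} (−1)^{⟨a, y − s'⟩}`,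
which is `|A|` if `y − s' ∈ A^⊥` and `0` otherwise. Nondegeneracy of the dot product gives
`|A| |A^⊥| = 2^n`, so the constant is `|A^⊥|^{-1/2}`.
-/

open Matrix

lemma Fintype.sum_ite_sub_mem {G S M : Type*} [AddGroup G] [Fintype G] [SetLike S G]
    [AddCommMonoid M] (p : S) [Fintype p] (s : G) (f : G → M) :
    ∑ x, (if x - s ∈ p then f x else 0) = ∑ a : p, f (a + s) :=
  calc ∑ x, (if x - s ∈ p then f x else 0) = ∑ x, if x ∈ p then f (x + s) else 0 :=
        Fintype.sum_equiv (Equiv.subRight s) _ _ fun x => by simp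
    _ = ∑ a : p, f (a + s) := by
        rw [← Finset.sum_filter]
        exact Finset.sum_subtype _ (by simp) _

lemma ZMod.two_cases (x : ZMod 2) : x = 0 ∨ x = 1 := by
  revert x; decide

lemma sign_add (a b : ZMod 2) : sign (a + b) = sign a * sign b := by
  rcases a.two_cases with rfl | rfl <;> rcases b.two_cases with rfl | rfl <;>
    simp [sign, show (1 + 1 : ZMod 2) = 0 from rfl]

lemma sign_sub (a b : ZMod 2) : sign (a - b) = sign a * sign b := by
  rw [CharTwo.sub_eq_add, sign_add]

lemma sign_mul_self_eq_one (a : ZMod 2) : sign a * sign a = 1 := by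
  rw [← sign_add, CharTwo.add_self_eq_zero]
  rfl

lemma sign_injective : Function.Injective sign := by
  intro a b h
  rcases a.two_cases with rfl | rfl <;> rcases b.two_cases with rfl | rfl <;>
    simp [sign] at h ⊢ <;> norm_num at h

lemma pairing_comm {n : ℕ} (x y : V n) : pairing x y = pairing y x :=
  dotProduct_comm x y

lemma pairing_add_left {n : ℕ} (x y z : V n) :
    pairing (x + y) z = pairing x z + pairing y z :=
  add_dotProduct x y z

lemma pairing_sub_left {n : ℕ} (x y z : V n) :
    pairing (x - y) z = pairing x z - pairing y z :=
  sub_dotProduct x y z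

lemma pairing_sub_right {n : ℕ} (x y z : V n) :
    pairing x (y - z) = pairing x y - pairing x z :=
  dotProduct_sub x y z

lemma perp_eq_orthogonal {n : ℕ} (A : Submodule (ZMod 2) (V n)) :
    perp A = (1 : Matrix (Fin n) (Fin n) (ZMod 2)).toBilin'.orthogonal A := by
  ext y
  simp [perp, LinearMap.BilinForm.mem_orthogonal_iff, Matrix.toBilin'_apply', pairing,
    dotProduct]

lemma card_mul_card_perp {n : ℕ} (A : Submodule (ZMod 2) (V n)) :
    Nat.card A * Nat.card (perp A) = 2 ^ n := by
  have hnd := LinearMap.BilinForm.nondegenerate_toBilin'_of_det_ne_zero'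
    (1 : Matrix (Fin n) (Fin n) (ZMod 2)) (by simp)
  have hle : Module.finrank (ZMod 2) A ≤ n := by
    simpa using Submodule.finrank_le A
  rw [Module.natCard_eq_pow_finrank (K := ZMod 2) (V := A),
    Module.natCard_eq_pow_finrank (K := ZMod 2) (V := perp A), perp_eq_orthogonal,
    LinearMap.BilinForm.finrank_orthogonal hnd, Nat.card_zmod, ← pow_add]
  simp [hle]

lemma inv_sqrt_card_perp {n : ℕ} (A : Submodule (ZMod 2) (V n)) :
    (Real.sqrt (Nat.card (perp A)) : ℂ)⁻¹ =
      (Real.sqrt (2 ^ n) : ℂ)⁻¹ * (Real.sqrt (Nat.card A) : ℂ)⁻¹ * Nat.card A := by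
  have hA : (0 : ℝ) < Nat.card A := by exact_mod_cast Nat.card_pos
  have h : (Real.sqrt (Nat.card (perp A)))⁻¹ =
      (Real.sqrt (2 ^ n))⁻¹ * (Real.sqrt (Nat.card A))⁻¹ * Nat.card A := by
    have h2n : (2 : ℝ) ^ n = Nat.card A * Nat.card (perp A) := by
      exact_mod_cast (card_mul_card_perp A).symm
    rw [h2n, Real.sqrt_mul hA.le]
    field_simp
    rw [Real.sq_sqrt hA.le]
  exact_mod_cast h

lemma sum_sign_pairing {n : ℕ} (A : Submodule (ZMod 2) (V n)) (z : V n) :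
    ∑ a : A, sign (pairing (a : V n) z) = if z ∈ perp A then (Nat.card A : ℂ) else 0 := by
  let ψ : AddChar A ℂ :=
    { toFun := fun a => sign (pairing (a : V n) z)
      map_zero_eq_one' := by simp [pairing, sign]
      map_add_eq_mul' := fun a b => by simp [pairing_add_left, sign_add] }
  have hψ : ψ = 0 ↔ z ∈ perp A := by
    have hsign : ∀ b, sign b = 1 ↔ b = 0 := fun b => sign_injective.eq_iff' rfl
    simp [AddChar.eq_zero_iff, ψ, perp, hsign]
  rw [Nat.card_eq_fintype_card, ← hψ]
  exact ψ.sum_eq_ite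

lemma cosetState_apply {n : ℕ} (A : Submodule (ZMod 2) (V n)) (s s' x : V n) :
    cosetState A s s' x = (Real.sqrt (Nat.card A) : ℂ)⁻¹ *
      if x - s ∈ A then sign (pairing (x - s) s') else 0 := by
  simp only [cosetState, PiLp.smul_apply, smul_eq_mul, WithLp.ofLp_sum, Finset.sum_apply,
    PiLp.single_apply]
  congr 1
  split_ifs with h
  · rw [Fintype.sum_eq_single ⟨x - s, h⟩]
    · simp
    · intro a ha
      rw [if_neg, mul_zero]
      rintro rfl
      exact ha (Subtype.ext (add_sub_cancel_right _ _).symm)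
  · refine Finset.sum_eq_zero fun a _ => ?_
    rw [if_neg, mul_zero]
    rintro rfl
    exact h (by simp)

lemma hadamard_mulVec_cosetState_apply {n : ℕ} (A : Submodule (ZMod 2) (V n))
    (s s' y : V n) :
    (Hmat n).mulVec (cosetState A s s') y = (Real.sqrt (2 ^ n) : ℂ)⁻¹ *
      (Real.sqrt (Nat.card A) : ℂ)⁻¹ * sign (pairing y s) *
        ∑ a : A, sign (pairing (a : V n) (y - s')) := by
  simp only [mulVec, dotProduct, cosetState_apply, Hmat, of_apply, mul_ite, mul_zero]
  rw [Fintype.sum_ite_sub_mem A]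
  simp only [add_sub_cancel_right, pairing_add_right, pairing_sub_right, sign_add, sign_sub,
    Finset.mul_sum]
  refine Finset.sum_congr rfl fun a _ => ?_
  rw [pairing_comm y]
  ring

theorem hadamard_mulVec_cosetState_general
    {n : ℕ} (A : Submodule (ZMod 2) (V n)) (s s' : V n) :
    (Hmat n).mulVec (cosetState A s s')
      = (sign (pairing s s') • cosetState (perp A) s' s : EuclideanSpace ℂ (V n)) := by
  funext y
  rw [hadamard_mulVec_cosetState_apply, sum_sign_pairing, PiLp.smul_apply, smul_eq_mul,
    cosetState_apply]
  split_ifs with h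
  · have hphase : sign (pairing s s') * sign (pairing (y - s') s) = sign (pairing y s) := by
      rw [pairing_sub_left, sign_sub, pairing_comm s', mul_left_comm, sign_mul_self_eq_one, mul_one]
    rw [← hphase, inv_sqrt_card_perp]
    ring
  · simp

/-- The Hadamard transform maps the coset state of `(A, s, s')` to the coset state of
`(A^⊥, s', s)`, up to the global phase `(−1)^{⟨s,s'⟩}`. -/
theorem hadamard_mulVec_cosetState
    {n : ℕ} (hn : 0 < n) (A : Submodule (ZMod 2) (V n)) (s s' : V n) :
    (Hmat n).mulVec (cosetState A s s')
      = (sign (pairing s s') • cosetState (perp A) s' s : EuclideanSpace ℂ (V n)) :=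
  hadamard_mulVec_cosetState_general A s s'
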